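/- Let U = {z ∈ 𝒜_p^n : ρ(z) < 0} be a strictly convex open subset with C² boundary, where ρ is a real-valued C² function whose real Hessian satisfies Σ_{l,m} (∂²ρ(z)/∂x_l ∂x_m) t_l t_m ≥ ε₀ |t|² for some ε₀ > 0 and all t ∈ ℝ^{2^p n} (for finite p; with the analogous condition for p = Λ). Define v_ρ(z) := Σ_{m=1}^{2^p} (w_ρ.S_m) S_m where w_ρ(z) = (∂ρ(z)/∂z_1, …, ∂ρ(z)/∂z_n) and S_m = i_{m−1}. Then v_ρ is an 𝒜_p-boundary distinguishing map for U, i.e. ⟨v_ρ(ζ); ζ − z⟩ ≠ 0 for every (ζ, z) ∈ ∂U × U. -/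

import Mathlib

noncomputable section

open scoped BigOperators Topology
open MeasureTheory Metric Set

/-- The Cayley–Dickson algebras over ℝ: `CD 0 = ℝ` and `CD (p+1)` is the
Cayley–Dickson double of `CD p`, carrying the Euclidean (ℓ²) norm, so that
`CD p` is `2^p`-dimensional and `‖z‖ = (z * conj z)^{1/2}`. -/
def CD : ℕ → Type
  | 0 => ℝ
  | p + 1 => WithLp 2 (CD p × CD p)

namespace CD

instance nacg : ∀ p, NormedAddCommGroup (CD p)
  | 0 => inferInstanceAs (NormedAddCommGroup ℝ)
  | p + 1 =>
    letI := nacg p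
    inferInstanceAs (NormedAddCommGroup (WithLp 2 (CD p × CD p)))

instance ips : ∀ p, InnerProductSpace ℝ (CD p)
  | 0 => inferInstanceAs (InnerProductSpace ℝ ℝ)
  | p + 1 =>
    letI := nacg p
    letI := ips p
    inferInstanceAs (InnerProductSpace ℝ (WithLp 2 (CD p × CD p)))

instance nsp (p : ℕ) : NormedSpace ℝ (CD p) := (ips p).toNormedSpace

instance fd : ∀ p, FiniteDimensional ℝ (CD p)
  | 0 => inferInstanceAs (FiniteDimensional ℝ ℝ)
  | p + 1 =>
    letI := nacg p
    letI := ips p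
    letI := fd p
    inferInstanceAs (FiniteDimensional ℝ (WithLp 2 (CD p × CD p)))

instance mspace (p : ℕ) : MeasurableSpace (CD p) := borel (CD p)
instance bspace (p : ℕ) : BorelSpace (CD p) := ⟨rfl⟩
instance msp (p : ℕ) : MeasureSpace (CD p) := measureSpaceOfInnerProductSpace

/-- Pairing for the doubling construction. -/
def pair {p : ℕ} (a b : CD p) : CD (p + 1) := (WithLp.equiv 2 (CD p × CD p)).symm (a, b)

def fst {p : ℕ} (x : CD (p + 1)) : CD p := (WithLp.equiv 2 (CD p × CD p) x).1

def snd {p : ℕ} (x : CD (p + 1)) : CD p := (WithLp.equiv 2 (CD p × CD p) x).2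

/-- Cayley–Dickson conjugation `z ↦ z̃`. -/
def conj : ∀ p, CD p → CD p
  | 0, a => a
  | p + 1, x => pair (conj p (fst x)) (-(snd x))

/-- The Cayley–Dickson multiplication, via the doubling formula
`(a,b)(c,d) = (ac - d̃b, da + bc̃)`. -/
def mul : ∀ p, CD p → CD p → CD p
  | 0, a, b => show ℝ from (show ℝ from a) * (show ℝ from b)
  | p + 1, x, y =>
      pair (mul p (fst x) (fst y) - mul p (conj p (snd y)) (snd x))
           (mul p (snd y) (fst x) + mul p (snd x) (conj p (fst y)))

def one : ∀ p, CD p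
  | 0 => show ℝ from 1
  | p + 1 => pair (one p) 0

instance (p : ℕ) : One (CD p) := ⟨one p⟩
instance (p : ℕ) : Mul (CD p) := ⟨mul p⟩
instance (p : ℕ) : Inhabited (CD p) := ⟨0⟩

/-- The standard generators `i_0 = 1, i_1, …, i_{2^p - 1}` of `CD p`
(indexed by natural numbers; the values for `m ≥ 2^p` are junk). -/
def gen : ∀ p : ℕ, ℕ → CD p
  | 0, _ => show ℝ from 1
  | p + 1, m => if m < 2 ^ p then pair (gen p m) 0 else pair 0 (gen p (m - 2 ^ p))

/-- Powers (the Cayley–Dickson algebras are power-associative). -/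
def pow (p : ℕ) (x : CD p) : ℕ → CD p
  | 0 => 1
  | k + 1 => mul p x (pow p x k)

/-- The Cayley–Dickson exponential function. -/
def cexp {p : ℕ} (x : CD p) : CD p := ∑' k : ℕ, (k.factorial : ℝ)⁻¹ • pow p x k

/-- A branch of the Cayley–Dickson logarithm. -/
def cln {p : ℕ} (z : CD p) : CD p := Classical.epsilon fun w => cexp w = z

/-- The Cayley–Dickson inverse `z⁻¹ = z̃ / |z|²`. -/
def inv {p : ℕ} (z : CD p) : CD p := (‖z‖ ^ 2)⁻¹ • conj p z

/-- The scalar version `(∂f/∂z̃).1 = Σ_m i_m (∂f/∂x_m)` of the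
`z̃`-superderivative of a function of one Cayley–Dickson variable. -/
def dbar (p : ℕ) (f : CD p → CD p) (z : CD p) : CD p :=
  ∑ m ∈ Finset.range (2 ^ p), gen p m * fderiv ℝ f z (gen p m)

/-- The scalar version `(∂f/∂z̃_j).1` of the partial `z̃_j`-superderivative of a
function of several Cayley–Dickson variables. -/
def dbarAt (p n : ℕ) (f : (Fin n → CD p) → CD p) (j : Fin n) (z : Fin n → CD p) : CD p :=
  ∑ m ∈ Finset.range (2 ^ p), gen p m * fderiv ℝ f z (Pi.single j (gen p m))

/-- `∂u/∂z̃ = ĝ` on `U`, in the sense of distributions: tested against all smooth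
real-valued test functions with compact support contained in `U`. -/
def DbarWeakEq (p : ℕ) (U : Set (CD p)) (u g : CD p → CD p) : Prop :=
  ∀ φ : CD p → ℝ, ContDiff ℝ (⊤ : ℕ∞) φ → HasCompactSupport φ → tsupport φ ⊆ U →
    ∫ z, φ z • g z =
      -∑ m ∈ Finset.range (2 ^ p), ∫ z, fderiv ℝ φ z (gen p m) • (gen p m * u z)

/-- `∂u/∂z̃_j = ĝ` on `U ⊆ 𝒜_p^n`, in the sense of distributions. -/
def DbarWeakEqAt (p n : ℕ) (U : Set (Fin n → CD p)) (u g : (Fin n → CD p) → CD p)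
    (j : Fin n) : Prop :=
  ∀ φ : (Fin n → CD p) → ℝ, ContDiff ℝ (⊤ : ℕ∞) φ → HasCompactSupport φ → tsupport φ ⊆ U →
    ∫ z, φ z • g z =
      -∑ m ∈ Finset.range (2 ^ p), ∫ z, fderiv ℝ φ z (Pi.single j (gen p m)) • (gen p m * u z)

/-- Formal (non-commutative, non-associative) polynomial expressions in the
variables `z_1, …, z_n` and `𝒜_p`-constants: the "ordered products" of the theory
of 𝒜_p-holomorphic functions. -/
inductive CDPoly (p n : ℕ) : Type
  | const : CD p → CDPoly p n
  | var : Fin n → CDPoly p n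
  | mul : CDPoly p n → CDPoly p n → CDPoly p n

def CDPoly.eval {p n : ℕ} : CDPoly p n → (Fin n → CD p) → CD p
  | .const a, _ => a
  | .var j, z => z j
  | .mul P Q, z => P.eval z * Q.eval z

/-- `f` is `𝒜_p`-holomorphic on `U`: locally `z`-analytic, i.e. locally on a ball
around each point it is the uniformly convergent sum of a series of ordered products
in `z - z₀` and `𝒜_p`-constants. -/
def CDHolomorphicOn {p n : ℕ} (f : (Fin n → CD p) → CD p) (U : Set (Fin n → CD p)) : Prop :=
  ∀ z₀ ∈ U, ∃ r > (0 : ℝ), ∃ g : ℕ → CDPoly p n,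
    TendstoUniformlyOn
      (fun N z => ∑ k ∈ Finset.range N, (g k).eval fun j => z j - z₀ j)
      f Filter.atTop (Metric.ball z₀ r ∩ U)

/-- Vector-valued `𝒜_p`-holomorphic maps (componentwise). -/
def CDHolomorphicOnV {p n m : ℕ} (f : (Fin n → CD p) → Fin m → CD p)
    (U : Set (Fin n → CD p)) : Prop :=
  ∀ i, CDHolomorphicOn (fun z => f z i) U

end CD


namespace CD

/-- The canonical scalar product `⟨ζ; z⟩ = Σ_l ζ̃_l z_l` on `𝒜_p^n`. -/
def scalarProd {p n : ℕ} (ζ z : Fin n → CD p) : CD p :=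
  ∑ l, conj p (ζ l) * z l

/-- `v_ρ(z) = Σ_m (w_ρ.S_m) S_m` where `w_ρ = (∂ρ/∂z_1, …, ∂ρ/∂z_n)` and
`S_m = i_{m-1}` run through the standard generators of `𝒜_p`. -/
def vrho (p n : ℕ) (ρ : (Fin n → CD p) → ℝ) (z : Fin n → CD p) : Fin n → CD p :=
  fun l => ∑ m ∈ Finset.range (2 ^ p),
    fderiv ℝ ρ z (Pi.single l (gen p m)) • gen p m

end CD

namespace CD

/-- Real part: inner product with 1. -/
def re {p : ℕ} (x : CD p) : ℝ := inner ℝ x (one p)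

lemma fst_pair {p : ℕ} (a b : CD p) : fst (pair a b) = a := rfl
lemma snd_pair {p : ℕ} (a b : CD p) : snd (pair a b) = b := rfl
lemma pair_neg {p : ℕ} (a b : CD p) : pair (-a) (-b) = -(pair a b) := rfl
lemma pair_add {p : ℕ} (a b c d : CD p) : pair (a+c) (b+d) = pair a b + pair c d := rfl
lemma pair_smul {p : ℕ} (r : ℝ) (a b : CD p) : pair (r • a) (r • b) = r • pair a b := rfl
lemma fst_neg {p : ℕ} (x : CD (p+1)) : fst (-x) = -(fst x) := rfl
lemma snd_neg {p : ℕ} (x : CD (p+1)) : snd (-x) = -(snd x) := rfl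
lemma pair_fst_snd {p : ℕ} (x : CD (p+1)) : pair (fst x) (snd x) = x := rfl

lemma inner_eq {p : ℕ} (x y : CD (p+1)) :
    (inner ℝ x y : ℝ) = inner ℝ (fst x) (fst y) + inner ℝ (snd x) (snd y) := rfl

lemma conj_neg : ∀ (p : ℕ) (a : CD p), conj p (-a) = -(conj p a)
  | 0, a => rfl
  | p + 1, a => by
      show pair (conj p (fst (-a))) (-(snd (-a))) = -(pair (conj p (fst a)) (-(snd a)))
      rw [fst_neg, snd_neg, conj_neg p, neg_neg, ← pair_neg, neg_neg]

lemma mul_neg' : ∀ (p : ℕ), (∀ a b : CD p, mul p (-a) b = -(mul p a b)) ∧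
    (∀ a b : CD p, mul p a (-b) = -(mul p a b))
  | 0 => ⟨fun a b => by
        show -(show ℝ from a) * (show ℝ from b) = -((show ℝ from a) * (show ℝ from b))
        ring,
      fun a b => by
        show (show ℝ from a) * -(show ℝ from b) = -((show ℝ from a) * (show ℝ from b))
        ring⟩
  | p + 1 => by
      obtain ⟨hl, hr⟩ := mul_neg' p
      constructor
      · intro a b
        show pair (mul p (fst (-a)) (fst b) - mul p (conj p (snd b)) (snd (-a)))
            (mul p (snd b) (fst (-a)) + mul p (snd (-a)) (conj p (fst b))) = _
        rw [fst_neg, snd_neg, hl, hr, hr, hl]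
        show _ = -(pair (mul p (fst a) (fst b) - mul p (conj p (snd b)) (snd a))
            (mul p (snd b) (fst a) + mul p (snd a) (conj p (fst b))))
        rw [← pair_neg]; congr 1 <;> abel
      · intro a b
        show pair (mul p (fst a) (fst (-b)) - mul p (conj p (snd (-b))) (snd a))
            (mul p (snd (-b)) (fst a) + mul p (snd a) (conj p (fst (-b)))) = _
        rw [fst_neg, snd_neg, conj_neg, conj_neg, hr, hl, hl, hr]
        show _ = -(pair (mul p (fst a) (fst b) - mul p (conj p (snd b)) (snd a))
            (mul p (snd b) (fst a) + mul p (snd a) (conj p (fst b))))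
        rw [← pair_neg]; congr 1 <;> abel

lemma re_mul_conj : ∀ (p : ℕ) (a b : CD p), re (mul p (conj p a) b) = inner ℝ a b
  | 0, a, b => by
      show (1 : ℝ) * ((show ℝ from a) * (show ℝ from b)) = (show ℝ from b) * (show ℝ from a)
      ring
  | p + 1, a, b => by
      show (inner ℝ (mul (p+1) (conj (p+1) a) b) (one (p+1)) : ℝ) = _
      rw [inner_eq, inner_eq a b]
      show (inner ℝ (mul p (conj p (fst a)) (fst b) -
        mul p (conj p (snd b)) (-(snd a))) (one p) : ℝ) + inner ℝ (snd (mul (p+1) (conj (p+1) a) b)) (0 : CD p) = _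
      rw [inner_zero_right, add_zero, (mul_neg' p).2, sub_neg_eq_add, inner_add_left]
      have h1 := re_mul_conj p (fst a) (fst b)
      have h2 := re_mul_conj p (snd b) (snd a)
      unfold re at h1 h2
      rw [h1, h2, real_inner_comm (snd b)]

lemma pair_zero_zero {p : ℕ} : pair (0 : CD p) 0 = 0 := rfl

lemma pair_sum {p : ℕ} {α : Type*} (s : Finset α) (f g : α → CD p) :
    pair (∑ m ∈ s, f m) (∑ m ∈ s, g m) = ∑ m ∈ s, pair (f m) (g m) := by
  classical
  induction s using Finset.induction with
  | empty => simp [pair_zero_zero]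
  | insert _ _ h ih =>
      rw [Finset.sum_insert h, Finset.sum_insert h, Finset.sum_insert h, pair_add, ih]

lemma gen_expansion : ∀ (p : ℕ) (x : CD p),
    ∑ m ∈ Finset.range (2 ^ p), (inner ℝ (gen p m) x : ℝ) • gen p m = x
  | 0, x => by
      simp only [pow_zero, Finset.range_one, Finset.sum_singleton]
      show (inner ℝ (1 : ℝ) x : ℝ) • (1 : ℝ) = x
      exact (by simp [RCLike.inner_apply] : ∀ y : ℝ, (inner ℝ (1 : ℝ) y : ℝ) • (1 : ℝ) = y) x
  | p + 1, x => by
      have hsplit : 2 ^ (p + 1) = 2 ^ p + 2 ^ p := by ring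
      rw [hsplit, Finset.sum_range_add]
      have h1 : ∀ m ∈ Finset.range (2 ^ p),
          (inner ℝ (gen (p+1) m) x : ℝ) • gen (p+1) m
            = pair ((inner ℝ (gen p m) (fst x) : ℝ) • gen p m) 0 := by
        intro m hm
        rw [Finset.mem_range] at hm
        have hg : gen (p+1) m = pair (gen p m) 0 := by rw [gen, if_pos hm]
        rw [hg, inner_eq, fst_pair, snd_pair, inner_zero_left, add_zero,
          ← pair_smul, smul_zero]
      have h2 : ∀ m ∈ Finset.range (2 ^ p),
          (inner ℝ (gen (p+1) (2 ^ p + m)) x : ℝ) • gen (p+1) (2 ^ p + m)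
            = pair 0 ((inner ℝ (gen p m) (snd x) : ℝ) • gen p m) := by
        intro m hm
        have hg : gen (p+1) (2 ^ p + m) = pair 0 (gen p m) := by
          rw [gen, if_neg (by omega), Nat.add_sub_cancel_left]
        rw [hg, inner_eq, fst_pair, snd_pair, inner_zero_left, zero_add,
          ← pair_smul, smul_zero]
      rw [Finset.sum_congr rfl h1, Finset.sum_congr rfl h2, ← pair_sum, ← pair_sum]
      simp only [Finset.sum_const_zero]
      rw [gen_expansion p (fst x), gen_expansion p (snd x), ← pair_add, add_zero,
        zero_add, pair_fst_snd]

lemma re_scalarProd {p n : ℕ} (ρ : (Fin n → CD p) → ℝ) (ζ w : Fin n → CD p) :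
    re (scalarProd (vrho p n ρ ζ) w) = fderiv ℝ ρ ζ w := by
  have hterm : ∀ l : Fin n,
      re (conj p (vrho p n ρ ζ l) * w l) = fderiv ℝ ρ ζ (Pi.single l (w l)) := by
    intro l
    have h1 : re (conj p (vrho p n ρ ζ l) * w l) = inner ℝ (vrho p n ρ ζ l) (w l) :=
      re_mul_conj p _ _
    rw [h1]
    unfold vrho
    rw [sum_inner]
    have key : fderiv ℝ ρ ζ (Pi.single l (w l)) =
        ∑ m ∈ Finset.range (2 ^ p),
          (inner ℝ (gen p m) (w l) : ℝ) * fderiv ℝ ρ ζ (Pi.single l (gen p m)) := by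
      set M := ((fderiv ℝ ρ ζ).toLinearMap).comp
        (LinearMap.single ℝ (fun _ : Fin n => CD p) l) with hM
      have hMe : ∀ v : CD p, M v = fderiv ℝ ρ ζ (Pi.single l v) := fun _ => rfl
      calc fderiv ℝ ρ ζ (Pi.single l (w l)) = M (w l) := rfl
        _ = M (∑ m ∈ Finset.range (2 ^ p), (inner ℝ (gen p m) (w l) : ℝ) • gen p m) := by
            rw [gen_expansion]
        _ = ∑ m ∈ Finset.range (2 ^ p),
              (inner ℝ (gen p m) (w l) : ℝ) * fderiv ℝ ρ ζ (Pi.single l (gen p m)) := by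
            rw [map_sum]
            exact Finset.sum_congr rfl fun m _ => by
              rw [_root_.map_smul, hMe, smul_eq_mul]
    rw [key]
    refine Finset.sum_congr rfl fun m _ => ?_
    rw [real_inner_smul_left, mul_comm]
  unfold scalarProd re
  rw [sum_inner]
  have : ∀ l : Fin n, (inner ℝ (conj p (vrho p n ρ ζ l) * w l) (one p) : ℝ)
      = fderiv ℝ ρ ζ (Pi.single l (w l)) := fun l => hterm l
  rw [Finset.sum_congr rfl fun l _ => this l, ← map_sum, Finset.univ_sum_single]

end CD

namespace CD

lemma re_zero {p : ℕ} : re (0 : CD p) = 0 := by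
  unfold re; exact inner_zero_left _

end CD

lemma fderiv_pos_of_frontier {p n : ℕ}
    (ρ : (Fin n → CD p) → ℝ) (hρ : ContDiff ℝ 2 ρ) (ε₀ : ℝ) (hε₀ : 0 < ε₀)
    (hconv : ∀ z t : Fin n → CD p,
      ε₀ * ‖t‖ ^ 2 ≤ fderiv ℝ (fun y => fderiv ℝ ρ y t) z t)
    (ζ : Fin n → CD p) (hζ : ζ ∈ frontier {z | ρ z < 0})
    (z : Fin n → CD p) (hz : ρ z < 0) :
    0 < fderiv ℝ ρ ζ (ζ - z) := by
  have hρ1 : Differentiable ℝ ρ := hρ.differentiable two_ne_zero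
  have hρ' : ContDiff ℝ 1 (fderiv ℝ ρ) := hρ.fderiv_right (le_refl 2)
  have hcont : Continuous ρ := hρ.continuous
  -- ρ ζ = 0
  have hζ0 : ρ ζ = 0 := by
    have hop : IsOpen {z : Fin n → CD p | ρ z < 0} :=
      isOpen_lt hcont continuous_const
    have hmem : ζ ∈ closure {z : Fin n → CD p | ρ z < 0} ∧
        ζ ∉ interior {z : Fin n → CD p | ρ z < 0} := by
      rw [frontier, Set.mem_diff] at hζ; exact hζ
    have hle : ρ ζ ≤ 0 := by
      have hsub : closure {z : Fin n → CD p | ρ z < 0} ⊆ {z | ρ z ≤ 0} :=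
        closure_minimal (fun x (hx : ρ x < 0) => (le_of_lt hx : ρ x ≤ 0))
          (isClosed_le hcont continuous_const)
      exact hsub hmem.1
    have hge : ¬ ρ ζ < 0 := by
      intro h
      exact hmem.2 (by rw [hop.interior_eq]; exact h)
    linarith [lt_or_ge (ρ ζ) 0]
  have hne : z ≠ ζ := fun h => by rw [h, hζ0] at hz; exact lt_irrefl 0 hz
  set w : Fin n → CD p := z - ζ with hw
  have hw0 : w ≠ 0 := sub_ne_zero.mpr hne
  set g : ℝ → ℝ := fun t => ρ (ζ + t • w) with hgdef
  set G : ℝ → ℝ := fun t => fderiv ℝ ρ (ζ + t • w) w with hGdef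
  have hline : ∀ t : ℝ, HasDerivAt (fun s : ℝ => ζ + s • w) w t := by
    intro t
    simpa using ((hasDerivAt_id t).smul_const w).const_add ζ
  have hg : ∀ t, HasDerivAt g (G t) t := fun t =>
    (hρ1.differentiableAt.hasFDerivAt).comp_hasDerivAt t (hline t)
  have hF : Differentiable ℝ (fun y => fderiv ℝ ρ y w) := fun y =>
    ((hρ'.differentiable one_ne_zero) y).clm_apply (differentiableAt_const w)
  have hG : ∀ t, HasDerivAt G
      (fderiv ℝ (fun y => fderiv ℝ ρ y w) (ζ + t • w) w) t := fun t =>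
    ((hF _).hasFDerivAt).comp_hasDerivAt t (hline t)
  have hGmono : StrictMono G := by
    apply strictMono_of_deriv_pos
    intro t
    rw [(hG t).deriv]
    have hwn : (0:ℝ) < ‖w‖ := norm_pos_iff.mpr hw0
    calc (0 : ℝ) < ε₀ * ‖w‖ ^ 2 := by positivity
      _ ≤ _ := hconv _ _
  obtain ⟨c, hc, hceq⟩ := exists_hasDerivAt_eq_slope g G one_pos
    (fun t _ => (hg t).continuousAt.continuousWithinAt) (fun t _ => hg t)
  have hg1 : g 1 = ρ z := by simp [hgdef, hw]
  have hg0 : g 0 = 0 := by simp [hgdef, hζ0]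
  have hGc : G c = ρ z := by rw [hceq, hg1, hg0]; ring
  have hG0 : G 0 < 0 := by
    have := hGmono hc.1
    rw [hGc] at this
    linarith
  have hG0e : G 0 = fderiv ℝ ρ ζ (z - ζ) := by simp [hGdef, hw]
  have : fderiv ℝ ρ ζ (ζ - z) = -(G 0) := by
    rw [hG0e, ← map_neg, neg_sub]
  rw [this]
  linarith

/-!  STATEMENT 13.  For a strictly convex open set `U = {ρ < 0}` with `C²` defining
function `ρ` whose real Hessian is `≥ ε₀ |t|²`, the map `v_ρ` is an `𝒜_p`-boundary
distinguishing map for `U`: `⟨v_ρ(ζ); ζ − z⟩ ≠ 0` for all `ζ ∈ ∂U` and `z ∈ U`. -/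
theorem vrho_is_boundary_distinguishing (p n : ℕ) (hp : 2 ≤ p) (hn : 1 ≤ n)
    (ρ : (Fin n → CD p) → ℝ) (hρ : ContDiff ℝ 2 ρ) (ε₀ : ℝ) (hε₀ : 0 < ε₀)
    (hconv : ∀ z t : Fin n → CD p,
      ε₀ * ‖t‖ ^ 2 ≤ fderiv ℝ (fun y => fderiv ℝ ρ y t) z t) :
    ∀ ζ ∈ frontier {z | ρ z < 0}, ∀ z ∈ {z : Fin n → CD p | ρ z < 0},
      CD.scalarProd (CD.vrho p n ρ ζ) (ζ - z) ≠ 0 := by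
  intro ζ hζ z hz hcontra
  have hpos := fderiv_pos_of_frontier ρ hρ ε₀ hε₀ hconv ζ hζ z hz
  have hre := CD.re_scalarProd ρ ζ (ζ - z)
  rw [hcontra, CD.re_zero] at hre
  linarith
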